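/- arXiv:1706.00316 — 7 statements merged into one kernel-verified Lean document; each statement's English description precedes it below -/
import Mathlib

section
/- Let n ≥ 1, let ρ : Fin n → ℝ satisfy |ρ i| < 1 for every i, let α : Fin n → ℝ and β ∈ ℝ. Then the (absolutely convergent) multiple series ∑_{k : Fin n → ℕ} (∏_{i} (ρ i)^{k i}) · cos(β + ∑_{i} (k i)·(α i)) equals [∑_{M ⊆ Fin n} (−1)^{|M|} (∏_{i ∈ M} ρ i) · cos(β − ∑_{i ∈ M} α i)] / ∏_{i} (1 + (ρ i)² − 2 (ρ i) cos(α i)). -/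
open Complex

private lemma prod_tsum_aux : ∀ (n : ℕ) (f : Fin n → ℕ → ℂ),
    (∀ i, Summable (fun k => ‖f i k‖)) →
    Summable (fun k : Fin n → ℕ => ‖∏ i, f i (k i)‖) ∧
    ∑' k : Fin n → ℕ, ∏ i, f i (k i) = ∏ i, ∑' k, f i k := by
  intro n
  induction n with
  | zero =>
    intro f _
    haveI : Unique (Fin 0 → ℕ) := ⟨⟨fun i => i.elim0⟩, fun f => funext fun i => i.elim0⟩
    constructor
    · exact summable_of_ne_finset_zero (s := {default}) fun b hb =>
        absurd (Finset.mem_singleton.mpr (Subsingleton.elim b default)) hb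
    · simp [tsum_eq_single (default : Fin 0 → ℕ)
        (fun b hb => absurd (Subsingleton.elim b default) hb)]
  | succ n ih =>
    intro f hf
    obtain ⟨Sg, Eg⟩ := ih (fun i => f i.succ) (fun i => hf i.succ)
    obtain ⟨G, hG⟩ : ∃ G : (Fin n → ℕ) → ℂ, ∀ k, G k = ∏ i, f i.succ (k i) :=
      ⟨_, fun _ => rfl⟩
    simp only [← hG] at Sg Eg
    set e : (ℕ × (Fin n → ℕ)) ≃ (Fin (n+1) → ℕ) := Fin.consEquiv (fun _ => ℕ) with he
    have key : ∀ p : ℕ × (Fin n → ℕ), ∏ i, f i (e p i) = f 0 p.1 * G p.2 := by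
      intro p
      rw [Fin.prod_univ_succ, hG]
      simp [he]
    have hS : Summable (fun p : ℕ × (Fin n → ℕ) => ‖f 0 p.1 * G p.2‖) :=
      Summable.mul_norm (hf 0) Sg
    have hSe : Summable ((fun k : Fin (n+1) → ℕ => ‖∏ i, f i (k i)‖) ∘ e) := by
      apply hS.congr
      intro p
      simp only [Function.comp_apply, key p]
    constructor
    · exact e.summable_iff.mp hSe
    · rw [← e.tsum_eq, Fin.prod_univ_succ]
      calc ∑' p : ℕ × (Fin n → ℕ), ∏ i, f i (e p i)
          = ∑' p : ℕ × (Fin n → ℕ), f 0 p.1 * G p.2 := tsum_congr key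
        _ = (∑' k, f 0 k) * (∑' k, G k) :=
            (tsum_mul_tsum_of_summable_norm (hf 0) Sg).symm
        _ = (∑' k, f 0 k) * ∏ i : Fin n, ∑' k, f i.succ k := by rw [Eg]

theorem tsum_cos_eq (n : ℕ) (hn : 1 ≤ n) (ρ α : Fin n → ℝ) (hρ : ∀ i, |ρ i| < 1) (β : ℝ) :
    ∑' k : Fin n → ℕ, (∏ i, ρ i ^ k i) * Real.cos (β + ∑ i, (k i : ℝ) * α i) =
      (∑ M : Finset (Fin n), (-1 : ℝ) ^ M.card * (∏ i ∈ M, ρ i) *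
        Real.cos (β - ∑ i ∈ M, α i)) /
      ∏ i, (1 + ρ i ^ 2 - 2 * ρ i * Real.cos (α i)) := by
  classical
  set z : Fin n → ℂ := fun i => (ρ i : ℂ) * Complex.exp (α i * Complex.I) with hz
  have hznorm : ∀ i, ‖z i‖ < 1 := by
    intro i
    rw [hz]
    simpa [Complex.norm_exp_ofReal_mul_I] using hρ i
  have hsum : ∀ i, Summable (fun k : ℕ => ‖z i ^ k‖) := by
    intro i
    simp only [norm_pow]
    exact summable_geometric_of_lt_one (norm_nonneg _) (hznorm i)
  obtain ⟨habs, heq⟩ := prod_tsum_aux n (fun i k => z i ^ k) hsum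
  have hzsum : ∀ i, ∑' k : ℕ, z i ^ k = (1 - z i)⁻¹ := fun i =>
    tsum_geometric_of_norm_lt_one (hznorm i)
  -- the complex terms
  have hterm : ∀ k : Fin n → ℕ, ∏ i, z i ^ k i
      = ((∏ i, ρ i ^ k i : ℝ) : ℂ) * Complex.exp ((β + ∑ i, (k i : ℝ) * α i) * Complex.I)
        * Complex.exp (-(β : ℝ) * Complex.I) := by
    intro k
    have : ∀ i, z i ^ k i
        = ((ρ i ^ k i : ℝ) : ℂ) * Complex.exp (((k i : ℝ) * α i) * Complex.I) := by
      intro i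
      rw [hz, mul_pow, ← Complex.exp_nat_mul]
      push_cast
      ring_nf
    rw [Finset.prod_congr rfl fun i _ => this i, Finset.prod_mul_distrib, ← Complex.exp_sum,
      mul_assoc, ← Complex.exp_add]
    congr 1
    · norm_cast
    · congr 1
      push_cast
      rw [show ((β:ℂ) + ∑ x, (k x : ℂ) * (α x : ℂ)) * Complex.I + -(β:ℂ) * Complex.I
          = (∑ x, (k x : ℂ) * (α x : ℂ)) * Complex.I by ring, Finset.sum_mul]
  have hterm2 : ∀ k : Fin n → ℕ, ((∏ i, z i ^ k i) * Complex.exp ((β : ℂ) * Complex.I)).re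
      = (∏ i, ρ i ^ k i) * Real.cos (β + ∑ i, (k i : ℝ) * α i) := by
    intro k
    rw [hterm k, mul_assoc, mul_assoc, ← Complex.exp_add,
      show (-(β:ℝ) : ℂ) * Complex.I + (β : ℂ) * Complex.I = 0 by push_cast; ring,
      Complex.exp_zero, mul_one, ← Complex.ofReal_add (β),
      Complex.re_ofReal_mul, Complex.exp_ofReal_mul_I_re]
  have hsc : Summable (fun k : Fin n → ℕ =>
      (∏ i, z i ^ k i) * Complex.exp ((β : ℂ) * Complex.I)) :=
    habs.of_norm.mul_right _
  have hL : (∑' k : Fin n → ℕ, (∏ i, ρ i ^ k i) * Real.cos (β + ∑ i, (k i : ℝ) * α i))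
      = (∑' k : Fin n → ℕ, (∏ i, z i ^ k i) * Complex.exp ((β : ℂ) * Complex.I)).re := by
    rw [Complex.re_tsum hsc]
    exact tsum_congr fun k => (hterm2 k).symm
  rw [hL, tsum_mul_right, heq,
    Finset.prod_congr rfl fun (i : Fin n) _ => hzsum i]
  -- denominator facts
  have hN : ∀ i, Complex.normSq (1 - z i) = 1 + ρ i ^ 2 - 2 * ρ i * Real.cos (α i) := by
    intro i
    rw [hz]
    simp only [Complex.normSq_apply, Complex.sub_re, Complex.sub_im, Complex.one_re,
      Complex.one_im, Complex.re_ofReal_mul, Complex.im_ofReal_mul,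
      Complex.exp_ofReal_mul_I_re, Complex.exp_ofReal_mul_I_im]
    have := Real.sin_sq_add_cos_sq (α i)
    nlinarith [this]
  have hNpos : ∀ i, 0 < Complex.normSq (1 - z i) := by
    intro i
    refine Complex.normSq_pos.mpr (sub_ne_zero.mpr ?_)
    intro h
    have := hznorm i
    rw [← h] at this
    simp at this
  have hDpos : 0 < ∏ i, Complex.normSq (1 - z i) := Finset.prod_pos fun i _ => hNpos i
  -- split inverses
  have hsplit : ∏ i, (1 - z i)⁻¹
      = (∏ i, (starRingEnd ℂ) (1 - z i)) * ((∏ i, Complex.normSq (1 - z i) : ℝ) : ℂ)⁻¹ := by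
    rw [Finset.prod_congr rfl fun (i : Fin n) _ => Complex.inv_def (1 - z i),
      Finset.prod_mul_distrib]
    congr 1
    push_cast
    rw [← Finset.prod_inv_distrib]
  rw [hsplit]
  -- products over subsets
  have hprodM : ∀ M : Finset (Fin n), ∏ i ∈ M, (starRingEnd ℂ) (z i)
      = ((∏ i ∈ M, ρ i : ℝ) : ℂ) * Complex.exp ((-(∑ i ∈ M, α i) : ℝ) * Complex.I) := by
    intro M
    rw [← map_prod]
    have : ∏ i ∈ M, z i = ((∏ i ∈ M, ρ i : ℝ) : ℂ)
        * Complex.exp (((∑ i ∈ M, α i : ℝ)) * Complex.I) := by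
      rw [hz]
      simp only []
      rw [Finset.prod_mul_distrib, ← Complex.exp_sum]
      push_cast
      rw [Finset.sum_mul]
    rw [this, map_mul, ← Complex.exp_conj]
    congr 1
    · simp
    · rw [map_mul, Complex.conj_I, Complex.conj_ofReal]
      push_cast
      ring
  have hexpand : ∏ i, (starRingEnd ℂ) (1 - z i)
      = ∑ M : Finset (Fin n), (-1 : ℂ) ^ M.card * ∏ i ∈ M, (starRingEnd ℂ) (z i) := by
    have h1 : ∀ i : Fin n, (starRingEnd ℂ) (1 - z i)
        = (-(starRingEnd ℂ) (z i)) + 1 := by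
      intro i
      rw [map_sub, map_one]
      ring
    rw [Finset.prod_congr rfl fun (i : Fin n) _ => h1 i, Finset.prod_add]
    rw [Finset.powerset_univ]
    refine Finset.sum_congr rfl fun M _ => ?_
    rw [Finset.prod_const_one, mul_one,
      show (fun i => -(starRingEnd ℂ) (z i)) = (fun i => (-1 : ℂ) * (starRingEnd ℂ) (z i))
        from funext fun i => by ring]
    rw [Finset.prod_mul_distrib, Finset.prod_const]
  -- compute the real part
  have hnum : ((∏ i, (starRingEnd ℂ) (1 - z i)) * Complex.exp ((β : ℂ) * Complex.I)).re
      = ∑ M : Finset (Fin n), (-1 : ℝ) ^ M.card * (∏ i ∈ M, ρ i)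
        * Real.cos (β - ∑ i ∈ M, α i) := by
    rw [hexpand, Finset.sum_mul, Complex.re_sum]
    refine Finset.sum_congr rfl fun M _ => ?_
    rw [hprodM M, mul_assoc, mul_assoc, ← Complex.exp_add,
      show ((-(∑ i ∈ M, α i) : ℝ) : ℂ) * Complex.I + (β : ℂ) * Complex.I
        = ((β - ∑ i ∈ M, α i : ℝ) : ℂ) * Complex.I by push_cast; ring,
      show ((-1 : ℂ)) ^ M.card = (((-1 : ℝ) ^ M.card : ℝ) : ℂ) by norm_cast,
      ← mul_assoc, ← Complex.ofReal_mul, Complex.re_ofReal_mul,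
      Complex.exp_ofReal_mul_I_re]
  -- combine
  rw [show (∏ i, (starRingEnd ℂ) (1 - z i))
      * ((∏ i, Complex.normSq (1 - z i) : ℝ) : ℂ)⁻¹ * Complex.exp ((β : ℂ) * Complex.I)
      = ((∏ i, (starRingEnd ℂ) (1 - z i)) * Complex.exp ((β : ℂ) * Complex.I))
        * (((∏ i, Complex.normSq (1 - z i))⁻¹ : ℝ) : ℂ) by push_cast; ring]
  rw [mul_comm _ (((∏ i, Complex.normSq (1 - z i))⁻¹ : ℝ) : ℂ), Complex.re_ofReal_mul, hnum]
  rw [Finset.prod_congr rfl fun (i : Fin n) _ => hN i] at hDpos ⊢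
  rw [div_eq_mul_inv, mul_comm]
end

section
/- Let n ≥ 1, let ρ : Fin n → ℝ satisfy |ρ i| < 1 for every i, let α : Fin n → ℝ and β ∈ ℝ. Then the (absolutely convergent) multiple series ∑_{k : Fin n → ℕ} (∏_{i} (ρ i)^{k i}) · sin(β + ∑_{i} (k i)·(α i)) equals [∑_{M ⊆ Fin n} (−1)^{|M|} (∏_{i ∈ M} ρ i) · sin(β − ∑_{i ∈ M} α i)] / ∏_{i} (1 + (ρ i)² − 2 (ρ i) cos(α i)). -/
/-!
With `z i = ρ i * exp (α i * I)`, the series is the imaginary part of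
`exp (β * I) * ∏ i, ∑' k, z i ^ k = exp (β * I) * ∏ i, (1 - z i)⁻¹`.
Multiplying each factor by its conjugate gives `(1 - z i)⁻¹ = (1 - conj (z i)) / |1 - z i|²` with
`|1 - z i|² = 1 + ρ i ^ 2 - 2 * ρ i * cos (α i)`, and expanding `∏ i, (1 - conj (z i))` over subsets
of `Fin n` gives the numerator.
-/

open Finset

section

variable {R ι : Type*} [NormedCommRing R]

theorem summable_norm_pi_prod {n : ℕ} (f : Fin n → ι → R)
    (hf : ∀ i, Summable fun b => ‖f i b‖) :
    Summable fun k : Fin n → ι => ‖∏ i, f i (k i)‖ := by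
  induction n with
  | zero => exact .of_finite
  | succ n ih =>
    rw [← (Fin.consEquiv fun _ => ι).summable_iff]
    simpa [Function.comp_def, Fin.consEquiv, Fin.prod_univ_succ] using
      (hf 0).mul_norm (ih (fun i => f i.succ) fun i => hf i.succ)

variable [CompleteSpace R]

theorem hasSum_pi_prod_of_summable_norm {n : ℕ} (f : Fin n → ι → R)
    (hf : ∀ i, Summable fun b => ‖f i b‖) :
    HasSum (fun k : Fin n → ι => ∏ i, f i (k i)) (∏ i, ∑' b, f i b) := by
  induction n with
  | zero => simp
  | succ n ih =>
    set g : (Fin n → ι) → R := fun v => ∏ i, f i.succ (v i)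
    have hg : Summable fun v => ‖g v‖ := summable_norm_pi_prod _ fun i => hf i.succ
    have htail : HasSum g (∏ i : Fin n, ∑' b, f i.succ b) := ih _ fun i => hf i.succ
    have hcons : (fun k => ∏ i, f i (k i)) ∘ Fin.consEquiv (fun _ => ι) =
        fun p => f 0 p.1 * g p.2 := by
      funext p
      simp [g, Fin.consEquiv, Fin.prod_univ_succ]
    rw [← (Fin.consEquiv fun _ => ι).hasSum_iff, hcons, Fin.prod_univ_succ]
    exact (hf 0).of_norm.hasSum.mul htail (summable_mul_of_summable_norm (hf 0) hg)

end

theorem hasSum_pi_prod_geometric {𝕜 : Type*} [NormedField 𝕜] [CompleteSpace 𝕜] {n : ℕ}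
    (z : Fin n → 𝕜) (hz : ∀ i, ‖z i‖ < 1) :
    HasSum (fun k : Fin n → ℕ => ∏ i, z i ^ k i) (∏ i, (1 - z i)⁻¹) := by
  have hf i : Summable fun k : ℕ => ‖z i ^ k‖ := by
    simpa only [norm_pow] using summable_geometric_of_lt_one (norm_nonneg _) (hz i)
  simpa only [tsum_geometric_of_norm_lt_one (hz _)] using
    hasSum_pi_prod_of_summable_norm (fun i k => z i ^ k) hf

namespace Complex

theorem ofReal_mul_exp_pow (r θ : ℝ) (k : ℕ) :
    ((r : ℂ) * exp (θ * I)) ^ k = ((r ^ k : ℝ) : ℂ) * exp ((k * θ : ℝ) * I) := by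
  rw [mul_pow, ← exp_nat_mul]
  push_cast
  ring_nf

theorem prod_ofReal_mul_exp {ι : Type*} (s : Finset ι) (r θ : ι → ℝ) :
    ∏ i ∈ s, (r i : ℂ) * exp (θ i * I) =
      ((∏ i ∈ s, r i : ℝ) : ℂ) * exp ((∑ i ∈ s, θ i : ℝ) * I) := by
  rw [prod_mul_distrib, ← exp_sum]
  push_cast
  rw [sum_mul]

theorem im_exp_mul_ofReal_mul_exp (φ r θ : ℝ) :
    (exp (φ * I) * (r * exp (θ * I))).im = r * Real.sin (φ + θ) := by
  rw [mul_left_comm, ← exp_add, ← add_mul, ← ofReal_add, im_ofReal_mul, exp_ofReal_mul_I_im]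

theorem prod_one_sub_ofReal_mul_exp {ι : Type*} [DecidableEq ι] (s : Finset ι) (r θ : ι → ℝ) :
    ∏ i ∈ s, (1 - r i * exp (θ i * I)) =
      ∑ M ∈ s.powerset, (((-1) ^ #M * ∏ i ∈ M, r i : ℝ) : ℂ) * exp ((∑ i ∈ M, θ i : ℝ) * I) := by
  rw [prod_sub]
  refine sum_congr rfl fun M _ => ?_
  rw [prod_const_one, mul_one, prod_ofReal_mul_exp]
  push_cast
  ring

theorem normSq_one_sub_ofReal_mul_exp (r θ : ℝ) :
    normSq (1 - r * exp (θ * I)) = 1 + r ^ 2 - 2 * r * Real.cos θ := by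
  rw [exp_mul_I, ← ofReal_cos, ← ofReal_sin, normSq_apply]
  simp only [sub_re, sub_im, one_re, one_im, mul_re, mul_im, add_re, add_im, ofReal_re, ofReal_im,
    I_re, I_im]
  linear_combination r ^ 2 * Real.sin_sq_add_cos_sq θ

theorem inv_one_sub_ofReal_mul_exp (r θ : ℝ) :
    (1 - r * exp (θ * I))⁻¹ =
      (1 - r * exp ((-θ : ℝ) * I)) * ((1 + r ^ 2 - 2 * r * Real.cos θ)⁻¹ : ℝ) := by
  rw [inv_def, normSq_one_sub_ofReal_mul_exp, map_sub, map_one, map_mul, conj_ofReal, ← exp_conj]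
  simp

end Complex

open Complex in
theorem tsum_sin_eq_general (n : ℕ) (ρ α : Fin n → ℝ) (hρ : ∀ i, |ρ i| < 1) (β : ℝ) :
    ∑' k : Fin n → ℕ, (∏ i, ρ i ^ k i) * Real.sin (β + ∑ i, (k i : ℝ) * α i) =
      (∑ M : Finset (Fin n), (-1 : ℝ) ^ M.card * (∏ i ∈ M, ρ i) *
        Real.sin (β - ∑ i ∈ M, α i)) /
      ∏ i, (1 + ρ i ^ 2 - 2 * ρ i * Real.cos (α i)) := by
  set z : Fin n → ℂ := fun i => ρ i * exp (α i * I)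
  have hz i : ‖z i‖ < 1 := by simpa [z, norm_exp_ofReal_mul_I] using hρ i
  have hsum := hasSum_im ((hasSum_pi_prod_geometric z hz).mul_left (exp (β * I)))
  have hterm (k : Fin n → ℕ) : (exp (β * I) * ∏ i, z i ^ k i).im =
      (∏ i, ρ i ^ k i) * Real.sin (β + ∑ i, (k i : ℝ) * α i) := by
    simp only [z, ofReal_mul_exp_pow, prod_ofReal_mul_exp, im_exp_mul_ofReal_mul_exp]
  rw [funext hterm] at hsum
  rw [hsum.tsum_eq]
  simp only [z, inv_one_sub_ofReal_mul_exp, prod_mul_distrib, prod_one_sub_ofReal_mul_exp]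
  rw [← ofReal_prod, prod_inv_distrib, ← mul_assoc, im_mul_ofReal, div_eq_mul_inv, mul_sum,
    im_sum, powerset_univ]
  simp only [im_exp_mul_ofReal_mul_exp, sum_neg_distrib, sub_eq_add_neg]

theorem tsum_sin_eq (n : ℕ) (hn : 1 ≤ n) (ρ α : Fin n → ℝ) (hρ : ∀ i, |ρ i| < 1) (β : ℝ) :
    ∑' k : Fin n → ℕ, (∏ i, ρ i ^ k i) * Real.sin (β + ∑ i, (k i : ℝ) * α i) =
      (∑ M : Finset (Fin n), (-1 : ℝ) ^ M.card * (∏ i ∈ M, ρ i) *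
        Real.sin (β - ∑ i ∈ M, α i)) /
      ∏ i, (1 + ρ i ^ 2 - 2 * ρ i * Real.cos (α i)) :=
  tsum_sin_eq_general n ρ α hρ β
end

section
/- Let n, k ≥ 0 with n + k ≥ 1 and let α : Fin (n+k) → ℝ. Write σ(ε) = #{l < n : ε l = 1} for a sign vector ε : Fin (n+k) → {−1,1}. If n is odd then ∏_{j<n} sin(α j) · ∏_{n ≤ j < n+k} cos(α j) = (−1)^{(n+1)/2} · (1/2^{n+k}) · ∑_{ε} (−1)^{σ(ε)} sin(∑_{l} (ε l)·(α l)); if n is even then ∏_{j<n} sin(α j) · ∏_{n ≤ j < n+k} cos(α j) = (−1)^{n/2} · (1/2^{n+k}) · ∑_{ε} (−1)^{σ(ε)} cos(∑_{l} (ε l)·(α l)), where in both cases ε runs over all functions Fin (n+k) → {−1, 1}. -/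
open Finset Complex

lemma sum_fun_subtype {β : Type*} [AddCommMonoid β] (m : ℕ) (s : Finset ℤ)
    (F : (Fin m → ℤ) → β) :
    ∑ ε : Fin m → s, F (fun i => (ε i : ℤ)) =
      ∑ p ∈ Fintype.piFinset (fun _ : Fin m => s), F p := by
  apply Finset.sum_bij' (i := fun ε _ => fun i => ((ε i : ℤ)))
    (j := fun p hp => fun i => (⟨p i, by simpa using (Fintype.mem_piFinset.mp hp) i⟩ : s))
  case hi => intro ε _; simp [Fintype.mem_piFinset]
  case hj => intro p hp; simp
  all_goals intro a ha
  · rfl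
  · rfl
  · rfl

lemma card_filter_lt (n k : ℕ) :
    (Finset.univ.filter (fun j : Fin (n + k) => (j : ℕ) < n)).card = n := by
  have : (Finset.univ.filter (fun j : Fin (n + k) => (j : ℕ) < n)) =
      Finset.map (Fin.castAddEmb k) Finset.univ := by
    ext j
    simp only [mem_filter, mem_univ, true_and, Finset.mem_map]
    constructor
    · intro hj
      refine ⟨⟨j, hj⟩, ?_⟩
      simp [Fin.castAddEmb, Fin.castAdd, Fin.ext_iff]
    · rintro ⟨i, rfl⟩
      simpa [Fin.castAddEmb, Fin.castAdd, Fin.ext_iff] using i.isLt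
  rw [this, Finset.card_map, Finset.card_univ, Fintype.card_fin]

lemma core (n k : ℕ) (α : Fin (n + k) → ℝ) :
    ((((∏ j ∈ Finset.univ.filter (fun j : Fin (n + k) => (j : ℕ) < n), Real.sin (α j)) *
      (∏ j ∈ Finset.univ.filter (fun j : Fin (n + k) => n ≤ (j : ℕ)), Real.cos (α j)) : ℝ)) : ℂ) =
    ∑ ε : Fin (n + k) → ({-1, 1} : Finset ℤ),
      (∏ j : Fin (n + k), ((if (j : ℕ) < n then -((ε j : ℤ) : ℂ) * Complex.I else 1) / 2)) *
        Complex.exp ((∑ l, ((ε l : ℤ) : ℝ) * α l : ℝ) * Complex.I) := by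
  set s : Finset ℤ := {-1, 1} with hs
  set f : Fin (n + k) → ℤ → ℂ := fun j x =>
    ((if (j : ℕ) < n then -((x : ℤ) : ℂ) * Complex.I else 1) / 2) *
      Complex.exp (((x : ℤ) : ℂ) * (α j) * Complex.I) with hf
  have key : ∀ j : Fin (n + k), ∑ x ∈ s, f j x =
      if (j : ℕ) < n then Complex.sin (α j) else Complex.cos (α j) := by
    intro j
    rw [hs, Finset.sum_pair (by decide : (-1 : ℤ) ≠ 1)]
    by_cases hj : (j : ℕ) < n <;>
      simp only [hf, hj, if_pos, if_neg, if_true, if_false, Complex.sin, Complex.cos] <;>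
      push_cast <;> ring_nf
  push_cast only [Complex.ofReal_mul, Complex.ofReal_prod, Complex.ofReal_sin, Complex.ofReal_cos]
  calc ((∏ j ∈ Finset.univ.filter (fun j : Fin (n + k) => (j : ℕ) < n), Complex.sin (α j)) *
      (∏ j ∈ Finset.univ.filter (fun j : Fin (n + k) => n ≤ (j : ℕ)), Complex.cos (α j)))
      = ∏ j : Fin (n + k), ∑ x ∈ s, f j x := by
        rw [← Finset.prod_filter_mul_prod_filter_not Finset.univ
          (fun j : Fin (n + k) => (j : ℕ) < n) (fun j => ∑ x ∈ s, f j x)]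
        congr 1
        · exact Finset.prod_congr rfl fun j hj => by
            rw [key]; rw [Finset.mem_filter] at hj; simp [hj.2]
        · rw [show (Finset.univ.filter (fun j : Fin (n + k) => n ≤ (j : ℕ))) =
              (Finset.univ.filter (fun j : Fin (n + k) => ¬ (j : ℕ) < n)) by
            apply Finset.filter_congr; intro j _; simp [not_lt]]
          exact Finset.prod_congr rfl fun j hj => by
            rw [key]; rw [Finset.mem_filter] at hj; simp [hj.2]
    _ = ∑ p ∈ Fintype.piFinset (fun _ : Fin (n + k) => s), ∏ j, f j (p j) :=
        Finset.prod_univ_sum _ _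
    _ = ∑ ε : Fin (n + k) → s, ∏ j, f j (ε j) := by
        rw [← sum_fun_subtype (n + k) s (fun p => ∏ j, f j (p j))]
    _ = _ := by
        apply Finset.sum_congr rfl
        intro ε _
        rw [hf]
        simp only []
        rw [Finset.prod_mul_distrib, ← Complex.exp_sum]
        congr 1
        push_cast
        rw [Finset.sum_mul]


lemma coefProd (n k : ℕ) (ε : Fin (n + k) → ({-1, 1} : Finset ℤ))
    (hcard : (Finset.univ.filter (fun j : Fin (n + k) => (j : ℕ) < n)).card = n) :
    (∏ j : Fin (n + k), ((if (j : ℕ) < n then -((ε j : ℤ) : ℂ) * Complex.I else 1) / 2))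
    = (1 / 2 ^ (n + k) : ℂ) * ((-Complex.I) ^ n *
        (-1 : ℂ) ^ (n - (Finset.univ.filter
          (fun l : Fin (n + k) => (l : ℕ) < n ∧ (ε l : ℤ) = 1)).card)) := by
  set A := Finset.univ.filter (fun j : Fin (n + k) => (j : ℕ) < n) with hA
  set c := (Finset.univ.filter
      (fun l : Fin (n + k) => (l : ℕ) < n ∧ (ε l : ℤ) = 1)).card with hc
  have step1 : (∏ j : Fin (n + k), ((if (j : ℕ) < n then -((ε j : ℤ) : ℂ) * Complex.I else 1) / 2))
      = (∏ j ∈ A, (-((ε j : ℤ) : ℂ) * Complex.I)) / 2 ^ (n + k) := by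
    rw [Finset.prod_div_distrib, Finset.prod_const, Finset.card_univ, Fintype.card_fin,
      Finset.prod_ite, Finset.prod_const_one, mul_one]
  have step2 : (∏ j ∈ A, (-((ε j : ℤ) : ℂ) * Complex.I))
      = (-Complex.I) ^ n * ∏ j ∈ A, ((ε j : ℤ) : ℂ) := by
    rw [show (∏ j ∈ A, (-((ε j : ℤ) : ℂ) * Complex.I))
        = ∏ j ∈ A, ((-Complex.I) * ((ε j : ℤ) : ℂ)) from Finset.prod_congr rfl fun j _ => by ring,
      Finset.prod_mul_distrib, Finset.prod_const, hcard]
  have hsplit : (A.filter (fun j => (ε j : ℤ) = 1)).card +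
      (A.filter (fun j => ¬ (ε j : ℤ) = 1)).card = n := by
    rw [Finset.card_filter_add_card_filter_not, hcard]
  have hAc : (A.filter (fun j => (ε j : ℤ) = 1)) =
      Finset.univ.filter (fun l : Fin (n + k) => (l : ℕ) < n ∧ (ε l : ℤ) = 1) := by
    rw [hA, Finset.filter_filter]
  have step3 : (∏ j ∈ A, ((ε j : ℤ) : ℂ)) = (-1 : ℂ) ^ (n - c) := by
    rw [← Finset.prod_filter_mul_prod_filter_not A (fun j => (ε j : ℤ) = 1)]
    have h1 : ∏ j ∈ A.filter (fun j => (ε j : ℤ) = 1), ((ε j : ℤ) : ℂ) = 1 :=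
      Finset.prod_eq_one fun j hj => by
        rw [Finset.mem_filter] at hj; rw [hj.2]; norm_num
    have h2 : ∏ j ∈ A.filter (fun j => ¬ (ε j : ℤ) = 1), ((ε j : ℤ) : ℂ)
        = (-1 : ℂ) ^ (A.filter (fun j => ¬ (ε j : ℤ) = 1)).card := by
      rw [Finset.prod_congr rfl (fun j hj => ?_), Finset.prod_const]
      rw [Finset.mem_filter] at hj
      have hmem := (ε j).2
      simp only [Finset.mem_insert, Finset.mem_singleton] at hmem
      rcases hmem with h | h
      · rw [h]; norm_num
      · exact absurd h hj.2
    rw [h1, h2, one_mul]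
    congr 1
    rw [hc, ← hAc]
    omega
  rw [step1, step2, step3]
  ring


lemma neg_one_pow_self_mul (c : ℕ) : ((-1 : ℝ)) ^ c * (-1 : ℝ) ^ c = 1 := by
  rw [← pow_add]; exact Even.neg_one_pow ⟨c, rfl⟩

lemma term_re_odd (m n c t : ℕ) (hc : c ≤ n) (hn : n = 2 * t + 1) (S : ℝ) :
    ((1 / 2 ^ m : ℂ) * ((-Complex.I) ^ n * (-1 : ℂ) ^ (n - c)) *
      Complex.exp ((S : ℝ) * Complex.I)).re
    = (-1 : ℝ) ^ ((n + 1) / 2) * (1 / 2 ^ m) * ((-1 : ℝ) ^ c * Real.sin S) := by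
  subst hn
  have h1 : (-Complex.I) ^ (2 * t + 1) = (-1 : ℂ) ^ t * -Complex.I := by
    rw [pow_succ, pow_mul]
    norm_num [Complex.I_sq]
  have h2 : (2 * t + 1 + 1) / 2 = t + 1 := by omega
  have h3 : (-1 : ℝ) ^ (2 * t + 1 - c) * (-1 : ℝ) ^ c = (-1 : ℝ) ^ (t + 1) * (-1 : ℝ) ^ t := by
    rw [← pow_add, ← pow_add]
    congr 1
    omega
  have key : ((1 / 2 ^ m : ℂ) * ((-Complex.I) ^ (2 * t + 1) * (-1 : ℂ) ^ (2 * t + 1 - c)) *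
      Complex.exp ((S : ℝ) * Complex.I))
      = (((1 / 2 ^ m) * ((-1 : ℝ) ^ t * (-1 : ℝ) ^ (2 * t + 1 - c)) : ℝ) : ℂ) *
        (-Complex.I * Complex.exp ((S : ℝ) * Complex.I)) := by
    rw [h1]; push_cast; ring
  rw [key, Complex.re_ofReal_mul]
  have h4 : (-Complex.I * Complex.exp ((S : ℝ) * Complex.I)).re = Real.sin S := by
    simp [Complex.exp_mul_I, Complex.sin_ofReal_re, Complex.cos_ofReal_re]
  rw [h4, h2]
  have h5 : (-1 : ℝ) ^ (2 * t + 1 - c) = ((-1 : ℝ) ^ (t + 1) * (-1 : ℝ) ^ t) * (-1 : ℝ) ^ c := by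
    calc (-1 : ℝ) ^ (2 * t + 1 - c)
        = ((-1 : ℝ) ^ (2 * t + 1 - c) * (-1 : ℝ) ^ c) * (-1 : ℝ) ^ c := by
          rw [mul_assoc, neg_one_pow_self_mul, mul_one]
      _ = ((-1 : ℝ) ^ (t + 1) * (-1 : ℝ) ^ t) * (-1 : ℝ) ^ c := by rw [h3]
  rw [h5]
  have h6 := neg_one_pow_self_mul t
  linear_combination (1 / 2 ^ m * (-1 : ℝ) ^ (t + 1) * (-1 : ℝ) ^ c * Real.sin S) * h6

lemma term_re_even (m n c t : ℕ) (hc : c ≤ n) (hn : n = 2 * t) (S : ℝ) :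
    ((1 / 2 ^ m : ℂ) * ((-Complex.I) ^ n * (-1 : ℂ) ^ (n - c)) *
      Complex.exp ((S : ℝ) * Complex.I)).re
    = (-1 : ℝ) ^ (n / 2) * (1 / 2 ^ m) * ((-1 : ℝ) ^ c * Real.cos S) := by
  subst hn
  have h1 : (-Complex.I) ^ (2 * t) = (-1 : ℂ) ^ t := by
    rw [pow_mul]
    norm_num [Complex.I_sq]
  have h2 : 2 * t / 2 = t := by omega
  have h3 : (-1 : ℝ) ^ (2 * t - c) * (-1 : ℝ) ^ c = (-1 : ℝ) ^ t * (-1 : ℝ) ^ t := by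
    rw [← pow_add, ← pow_add]
    congr 1
    omega
  have key : ((1 / 2 ^ m : ℂ) * ((-Complex.I) ^ (2 * t) * (-1 : ℂ) ^ (2 * t - c)) *
      Complex.exp ((S : ℝ) * Complex.I))
      = (((1 / 2 ^ m) * ((-1 : ℝ) ^ t * (-1 : ℝ) ^ (2 * t - c)) : ℝ) : ℂ) *
        Complex.exp ((S : ℝ) * Complex.I) := by
    rw [h1]; push_cast; ring
  rw [key, Complex.re_ofReal_mul]
  have h4 : (Complex.exp ((S : ℝ) * Complex.I)).re = Real.cos S := by
    simp [Complex.exp_mul_I, Complex.sin_ofReal_re, Complex.cos_ofReal_re]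
  rw [h4, h2]
  have h5 : (-1 : ℝ) ^ (2 * t - c) = ((-1 : ℝ) ^ t * (-1 : ℝ) ^ t) * (-1 : ℝ) ^ c := by
    calc (-1 : ℝ) ^ (2 * t - c)
        = ((-1 : ℝ) ^ (2 * t - c) * (-1 : ℝ) ^ c) * (-1 : ℝ) ^ c := by
          rw [mul_assoc, neg_one_pow_self_mul, mul_one]
      _ = ((-1 : ℝ) ^ t * (-1 : ℝ) ^ t) * (-1 : ℝ) ^ c := by rw [h3]
  rw [h5]
  have h6 := neg_one_pow_self_mul t
  linear_combination (1 / 2 ^ m * (-1 : ℝ) ^ t * (-1 : ℝ) ^ c * Real.cos S) * h6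

theorem prod_sin_cos_eq_sum_signs (n k : ℕ) (h : 1 ≤ n + k) (α : Fin (n + k) → ℝ) :
    (Odd n →
      (∏ j ∈ Finset.univ.filter (fun j : Fin (n + k) => (j : ℕ) < n), Real.sin (α j)) *
        (∏ j ∈ Finset.univ.filter (fun j : Fin (n + k) => n ≤ (j : ℕ)), Real.cos (α j)) =
      (-1 : ℝ) ^ ((n + 1) / 2) * (1 / 2 ^ (n + k)) *
        ∑ ε : Fin (n + k) → ({-1, 1} : Finset ℤ),
          (-1 : ℝ) ^
              (Finset.univ.filter
                (fun l : Fin (n + k) => (l : ℕ) < n ∧ (ε l : ℤ) = 1)).card *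
            Real.sin (∑ l, ((ε l : ℤ) : ℝ) * α l)) ∧
    (Even n →
      (∏ j ∈ Finset.univ.filter (fun j : Fin (n + k) => (j : ℕ) < n), Real.sin (α j)) *
        (∏ j ∈ Finset.univ.filter (fun j : Fin (n + k) => n ≤ (j : ℕ)), Real.cos (α j)) =
      (-1 : ℝ) ^ (n / 2) * (1 / 2 ^ (n + k)) *
        ∑ ε : Fin (n + k) → ({-1, 1} : Finset ℤ),
          (-1 : ℝ) ^
              (Finset.univ.filter
                (fun l : Fin (n + k) => (l : ℕ) < n ∧ (ε l : ℤ) = 1)).card *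
            Real.cos (∑ l, ((ε l : ℤ) : ℝ) * α l)) := by
  have hre := congrArg Complex.re (core n k α)
  rw [Complex.ofReal_re, Complex.re_sum] at hre
  have hc : ∀ ε : Fin (n + k) → ({-1, 1} : Finset ℤ),
      (Finset.univ.filter
        (fun l : Fin (n + k) => (l : ℕ) < n ∧ (ε l : ℤ) = 1)).card ≤ n := by
    intro ε
    refine le_trans (Finset.card_le_card ?_) (le_of_eq (card_filter_lt n k))
    intro x hx
    rw [Finset.mem_filter] at hx ⊢
    exact ⟨hx.1, hx.2.1⟩
  constructor
  · intro hodd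
    obtain ⟨t, ht⟩ := hodd
    rw [hre, Finset.mul_sum]
    apply Finset.sum_congr rfl
    intro ε _
    rw [coefProd n k ε (card_filter_lt n k),
      term_re_odd (n + k) n _ t (hc ε) (by omega) (∑ l, ((ε l : ℤ) : ℝ) * α l)]
  · intro heven
    obtain ⟨t, ht⟩ := heven
    rw [hre, Finset.mul_sum]
    apply Finset.sum_congr rfl
    intro ε _
    rw [coefProd n k ε (card_filter_lt n k),
      term_re_even (n + k) n _ t (hc ε) (by omega) (∑ l, ((ε l : ℤ) : ℝ) * α l)]
end

section
/- Let k, n ∈ ℕ with n even, let t : Fin (n+k) → ℤ, let α : Fin (n+k) → ℝ with sin(α s) ≠ 0 for every s < n, and let ρ ∈ ℝ with |ρ| < 1. Write σ(ε) = #{l < n : ε l = 1} for a sign vector ε : Fin (n+k) → {−1,1}. Then ∑_{j=0}^{∞} ρ^j · ∏_{s<n} U_{j + t s}(cos(α s)) · ∏_{n ≤ s < n+k} T_{j + t s}(cos(α s)) = ((−1)^{n/2} / (2^{n+k} · ∏_{s<n} sin(α s))) · ∑_{ε} (−1)^{σ(ε)} · [cos(∑_{s<n} (ε s)(t s + 1)(α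 s) + ∑_{n ≤ s} (ε s)(t s)(α s)) − ρ·cos(∑_{s<n} (ε s)(t s)(α s) + ∑_{n ≤ s} (ε s)(t s − 1)(α s))] / (1 − 2ρ·cos(∑_{s} (ε s)(α s)) + ρ²), where ε runs over all functions Fin (n+k) → {−1,1}. -/
/-!
Multiplying by `∏_{s<n} sin α_s` turns the `U`-factors into `sin ((j + t_s + 1) α_s)`, while the
`T`-factors are `cos ((j + t_s) α_s)`. Writing each sine and cosine as a sum of `e^{± i x}` expands
the `j`-th term into a sum over sign vectors `ε` of `ρ^j cos (φ_ε + j θ_ε)`, with the coefficient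
`(2i)^{-n} 2^{-k}`, which is real because `n` is even. Summing over `j` is then the real part of a
geometric series: `∑ ρ^j cos (φ + j θ) = (cos φ - ρ cos (φ - θ)) / (1 - 2 ρ cos θ + ρ²)`.
-/

open Complex Finset Polynomial

lemma re_exp_mul_I_div_one_sub (φ θ ρ : ℝ) :
    (exp (φ * I) / (1 - ρ * exp (θ * I))).re
      = (Real.cos φ - ρ * Real.cos (φ - θ)) / (1 - 2 * ρ * Real.cos θ + ρ ^ 2) := by
  have hnormSq : normSq (1 - ρ * exp (θ * I)) = 1 - 2 * ρ * Real.cos θ + ρ ^ 2 := by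
    simp only [normSq_apply, sub_re, sub_im, one_re, one_im, re_ofReal_mul, im_ofReal_mul,
      exp_ofReal_mul_I_re, exp_ofReal_mul_I_im]
    linear_combination ρ ^ 2 * Real.sin_sq_add_cos_sq θ
  rw [div_re, hnormSq]
  simp only [sub_re, sub_im, one_re, one_im, re_ofReal_mul, im_ofReal_mul,
    exp_ofReal_mul_I_re, exp_ofReal_mul_I_im, Real.cos_sub]
  ring

lemma hasSum_pow_mul_cos_add_mul {ρ : ℝ} (hρ : |ρ| < 1) (φ θ : ℝ) :
    HasSum (fun j : ℕ => ρ ^ j * Real.cos (φ + j * θ))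
      ((Real.cos φ - ρ * Real.cos (φ - θ)) / (1 - 2 * ρ * Real.cos θ + ρ ^ 2)) := by
  have hw : ‖(ρ : ℂ) * exp (θ * I)‖ < 1 := by
    rwa [norm_mul, norm_exp_ofReal_mul_I, mul_one, norm_real, Real.norm_eq_abs]
  have h := hasSum_re ((hasSum_geometric_of_norm_lt_one hw).mul_left (exp (φ * I)))
  rw [← div_eq_mul_inv, re_exp_mul_I_div_one_sub] at h
  convert h using 2 with j
  rw [mul_pow, ← exp_nat_mul, mul_left_comm, ← exp_add, ← ofReal_pow, re_ofReal_mul,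
    show (φ : ℂ) * I + j * (θ * I) = ((φ + j * θ : ℝ) : ℂ) * I by push_cast; ring,
    exp_ofReal_mul_I_re]

lemma sin_eq_sum_sign (z : ℂ) :
    sin z = ∑ e : ({-1, 1} : Finset ℤ), (e : ℂ) / (2 * I) * exp (e * z * I) := by
  rw [sum_coe_sort _ (fun e : ℤ => (e : ℂ) / (2 * I) * exp (e * z * I)), sum_pair (by norm_num),
    sin]
  field_simp
  push_cast
  ring_nf
  rw [I_sq]
  ring

lemma cos_eq_sum_sign (z : ℂ) :
    cos z = ∑ e : ({-1, 1} : Finset ℤ), exp (e * z * I) / 2 := by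
  rw [sum_coe_sort _ (fun e : ℤ => exp (e * z * I) / 2), sum_pair (by norm_num), cos]
  push_cast
  ring_nf

lemma prod_sign_eq_neg_one_pow {ι R : Type*} [CommRing R] {S : Finset ι} (hS : Even #S)
    (ε : ι → ({-1, 1} : Finset ℤ)) :
    ∏ s ∈ S, ((ε s : ℤ) : R) = (-1) ^ #{s ∈ S | (ε s : ℤ) = 1} := by
  have hε : ∀ s, ((ε s : ℤ) : R) = if (ε s : ℤ) = 1 then 1 else -1 := by
    intro s
    rcases mem_insert.mp (ε s).2 with h | h
    · simp [h]
    · simp [mem_singleton.mp h]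
  rw [prod_congr rfl fun s _ => hε s, prod_ite, prod_const_one, one_mul, prod_const]
  refine neg_one_pow_congr (Nat.even_add.mp ?_)
  rwa [add_comm, card_filter_add_card_filter_not]

section SignExpansion

variable {ι : Type*} [Fintype ι] [DecidableEq ι]

lemma prod_mul_prod_compl_eq_prod_ite {M : Type*} [CommMonoid M] (S : Finset ι) (f g : ι → M) :
    (∏ s ∈ S, f s) * ∏ s ∈ Sᶜ, g s = ∏ s, if s ∈ S then f s else g s := by
  rw [prod_ite]
  congr 2 <;> ext <;> simp

lemma prod_sin_mul_prod_cos_eq_sum_sign (S : Finset ι) (z w : ι → ℂ) :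
    (∏ s ∈ S, sin (z s)) * ∏ s ∈ Sᶜ, cos (w s) =
      ∑ ε : ι → ({-1, 1} : Finset ℤ), (∏ s ∈ S, ((ε s : ℤ) : ℂ)) / ((2 * I) ^ #S * 2 ^ #Sᶜ) *
        exp ((∑ s ∈ S, (ε s : ℂ) * z s + ∑ s ∈ Sᶜ, (ε s : ℂ) * w s) * I) := by
  rw [prod_mul_prod_compl_eq_prod_ite]
  simp_rw [sin_eq_sum_sign, cos_eq_sum_sign, ← sum_ite_irrel, Fintype.prod_sum,
    ← prod_mul_prod_compl_eq_prod_ite]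
  refine sum_congr rfl fun ε _ => ?_
  simp only [prod_mul_distrib, prod_div_distrib, prod_const, ← exp_sum]
  rw [add_mul, exp_add, sum_mul, sum_mul]
  ring

lemma two_mul_I_pow_mul_two_pow_card_compl {S : Finset ι} (hS : Even #S) :
    (2 * I) ^ #S * 2 ^ #Sᶜ = (((-1) ^ (#S / 2) * 2 ^ Fintype.card ι : ℝ) : ℂ) := by
  obtain ⟨m, hm⟩ := hS
  rw [← card_add_card_compl S, hm, mul_pow, ← two_mul, pow_mul, pow_mul I, I_sq]
  push_cast
  rw [Nat.mul_div_cancel_left _ two_pos, pow_add, pow_mul]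
  ring

lemma prod_sin_mul_prod_cos_eq_sum_cos (S : Finset ι) (hS : Even #S) (x y : ι → ℝ) :
    (∏ s ∈ S, Real.sin (x s)) * ∏ s ∈ Sᶜ, Real.cos (y s) =
      (-1) ^ (#S / 2) / 2 ^ Fintype.card ι *
        ∑ ε : ι → ({-1, 1} : Finset ℤ), (∏ s ∈ S, ((ε s : ℤ) : ℝ)) *
          Real.cos (∑ s ∈ S, (ε s : ℝ) * x s + ∑ s ∈ Sᶜ, (ε s : ℝ) * y s) := by
  have h := congrArg re (prod_sin_mul_prod_cos_eq_sum_sign S (fun s => x s) (fun s => y s))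
  rw [two_mul_I_pow_mul_two_pow_card_compl hS] at h
  simp only [← ofReal_sin, ← ofReal_cos, ← ofReal_prod, ← ofReal_mul, ← ofReal_intCast,
    ← ofReal_sum, ← ofReal_div, ← ofReal_add, re_sum, re_ofReal_mul, exp_ofReal_mul_I_re,
    ofReal_re] at h
  rw [h, mul_sum]
  refine sum_congr rfl fun ε _ => ?_
  obtain ⟨m, hm⟩ := hS
  rw [hm, ← two_mul, Nat.mul_div_cancel_left _ two_pos, div_eq_mul_inv, mul_inv, ← inv_pow,
    inv_neg_one]
  ring

lemma prod_sin_mul_prod_U_mul_prod_T_eq_sum_cos (S : Finset ι) (hS : Even #S) (t : ι → ℤ)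
    (α : ι → ℝ) (m : ℤ) :
    (∏ s ∈ S, Real.sin (α s)) *
        ((∏ s ∈ S, (Chebyshev.U ℝ (m + t s)).eval (Real.cos (α s))) *
          ∏ s ∈ Sᶜ, (Chebyshev.T ℝ (m + t s)).eval (Real.cos (α s))) =
      (-1) ^ (#S / 2) / 2 ^ Fintype.card ι *
        ∑ ε : ι → ({-1, 1} : Finset ℤ), (∏ s ∈ S, ((ε s : ℤ) : ℝ)) *
          Real.cos ((∑ s ∈ S, ((ε s : ℤ) : ℝ) * ((t s : ℝ) + 1) * α s +
            ∑ s ∈ Sᶜ, ((ε s : ℤ) : ℝ) * (t s : ℝ) * α s) + m * ∑ s, ((ε s : ℤ) : ℝ) * α s) := by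
  have hU : ∏ s ∈ S, (Chebyshev.U ℝ (m + t s)).eval (Real.cos (α s)) * Real.sin (α s) =
      ∏ s ∈ S, Real.sin (((m + t s : ℤ) + 1) * α s) :=
    prod_congr rfl fun s _ => Chebyshev.U_real_cos _ _
  have harg (ε : ι → ({-1, 1} : Finset ℤ)) :
      ∑ s ∈ S, ((ε s : ℤ) : ℝ) * (((m + t s : ℤ) + 1) * α s) +
        ∑ s ∈ Sᶜ, ((ε s : ℤ) : ℝ) * ((m + t s : ℤ) * α s) =
      ∑ s ∈ S, ((ε s : ℤ) : ℝ) * ((t s : ℝ) + 1) * α s +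
        ∑ s ∈ Sᶜ, ((ε s : ℤ) : ℝ) * (t s : ℝ) * α s + m * ∑ s, ((ε s : ℤ) : ℝ) * α s := by
    rw [← sum_add_sum_compl S, mul_add, mul_sum, mul_sum, add_add_add_comm, ← sum_add_distrib,
      ← sum_add_distrib]
    congr 1 <;> refine sum_congr rfl fun s _ => ?_ <;> push_cast <;> ring
  calc _ = (∏ s ∈ S, Real.sin (((m + t s : ℤ) + 1) * α s)) *
        ∏ s ∈ Sᶜ, Real.cos ((m + t s : ℤ) * α s) := by
        simp only [← hU, Chebyshev.T_real_cos, prod_mul_distrib]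
        ring
    _ = _ := by simp only [prod_sin_mul_prod_cos_eq_sum_cos S hS, harg]

theorem prod_sin_mul_tsum_pow_mul_prod_U_mul_prod_T (S : Finset ι) (hS : Even #S) (t : ι → ℤ)
    (α : ι → ℝ) {ρ : ℝ} (hρ : |ρ| < 1) :
    (∏ s ∈ S, Real.sin (α s)) * ∑' j : ℕ, ρ ^ j *
        (∏ s ∈ S, (Chebyshev.U ℝ ((j : ℤ) + t s)).eval (Real.cos (α s))) *
        ∏ s ∈ Sᶜ, (Chebyshev.T ℝ ((j : ℤ) + t s)).eval (Real.cos (α s)) =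
      (-1) ^ (#S / 2) / 2 ^ Fintype.card ι *
        ∑ ε : ι → ({-1, 1} : Finset ℤ), (∏ s ∈ S, ((ε s : ℤ) : ℝ)) *
          ((Real.cos (∑ s ∈ S, ((ε s : ℤ) : ℝ) * ((t s : ℝ) + 1) * α s +
                ∑ s ∈ Sᶜ, ((ε s : ℤ) : ℝ) * (t s : ℝ) * α s) -
              ρ * Real.cos (∑ s ∈ S, ((ε s : ℤ) : ℝ) * (t s : ℝ) * α s +
                ∑ s ∈ Sᶜ, ((ε s : ℤ) : ℝ) * ((t s : ℝ) - 1) * α s)) /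
            (1 - 2 * ρ * Real.cos (∑ s, ((ε s : ℤ) : ℝ) * α s) + ρ ^ 2)) := by
  rw [← tsum_mul_left]
  refine HasSum.tsum_eq ?_
  simp_rw [mul_assoc _ _ (∏ s ∈ Sᶜ, _), mul_left_comm (∏ s ∈ S, Real.sin (α s)) (ρ ^ _),
    prod_sin_mul_prod_U_mul_prod_T_eq_sum_cos S hS, Int.cast_natCast,
    mul_sum (univ : Finset (ι → ({-1, 1} : Finset ℤ))), mul_left_comm (ρ ^ _)]
  refine hasSum_sum fun ε _ => .mul_left _ (.mul_left _ ?_)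
  have hψ : ∑ s ∈ S, ((ε s : ℤ) : ℝ) * (t s : ℝ) * α s +
        ∑ s ∈ Sᶜ, ((ε s : ℤ) : ℝ) * ((t s : ℝ) - 1) * α s =
      ∑ s ∈ S, ((ε s : ℤ) : ℝ) * ((t s : ℝ) + 1) * α s +
        ∑ s ∈ Sᶜ, ((ε s : ℤ) : ℝ) * (t s : ℝ) * α s - ∑ s, ((ε s : ℤ) : ℝ) * α s := by
    rw [← sum_add_sum_compl S]
    simp only [mul_add, mul_sub, add_mul, sub_mul, mul_one, sum_add_distrib, sum_sub_distrib]
    ring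
  rw [hψ]
  exact hasSum_pow_mul_cos_add_mul hρ _ _

end SignExpansion

theorem chebyshev_mixed_gen_fun_even (k n : ℕ) (hn : Even n) (t : Fin (n + k) → ℤ)
    (α : Fin (n + k) → ℝ) (hα : ∀ s : Fin (n + k), (s : ℕ) < n → Real.sin (α s) ≠ 0)
    (ρ : ℝ) (hρ : |ρ| < 1) :
    ∑' j : ℕ, ρ ^ j *
        (∏ s ∈ Finset.univ.filter (fun s : Fin (n + k) => (s : ℕ) < n),
          (Chebyshev.U ℝ ((j : ℤ) + t s)).eval (Real.cos (α s))) *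
        (∏ s ∈ Finset.univ.filter (fun s : Fin (n + k) => n ≤ (s : ℕ)),
          (Chebyshev.T ℝ ((j : ℤ) + t s)).eval (Real.cos (α s))) =
      ((-1 : ℝ) ^ (n / 2) /
          (2 ^ (n + k) *
            ∏ s ∈ Finset.univ.filter (fun s : Fin (n + k) => (s : ℕ) < n), Real.sin (α s))) *
        ∑ ε : Fin (n + k) → ({-1, 1} : Finset ℤ),
          (-1 : ℝ) ^
              (Finset.univ.filter
                (fun l : Fin (n + k) => (l : ℕ) < n ∧ (ε l : ℤ) = 1)).card *
            ((Real.cos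
                ((∑ s ∈ Finset.univ.filter (fun s : Fin (n + k) => (s : ℕ) < n),
                    ((ε s : ℤ) : ℝ) * ((t s : ℝ) + 1) * α s) +
                  ∑ s ∈ Finset.univ.filter (fun s : Fin (n + k) => n ≤ (s : ℕ)),
                    ((ε s : ℤ) : ℝ) * (t s : ℝ) * α s) -
                ρ * Real.cos
                  ((∑ s ∈ Finset.univ.filter (fun s : Fin (n + k) => (s : ℕ) < n),
                      ((ε s : ℤ) : ℝ) * (t s : ℝ) * α s) +
                    ∑ s ∈ Finset.univ.filter (fun s : Fin (n + k) => n ≤ (s : ℕ)),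
                      ((ε s : ℤ) : ℝ) * ((t s : ℝ) - 1) * α s)) /
              (1 - 2 * ρ * Real.cos (∑ s, ((ε s : ℤ) : ℝ) * α s) + ρ ^ 2)) := by
  set S := univ.filter fun s : Fin (n + k) => (s : ℕ) < n
  have hSc : univ.filter (fun s : Fin (n + k) => n ≤ (s : ℕ)) = Sᶜ := by ext; simp [S]
  have hcard : #S = n := by simp [S, Fin.card_filter_val_lt]
  have hS : Even #S := by rwa [hcard]
  have hP : ∏ s ∈ S, Real.sin (α s) ≠ 0 :=
    prod_ne_zero_iff.mpr fun s hs => hα s (mem_filter.mp hs).2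
  have key := prod_sin_mul_tsum_pow_mul_prod_U_mul_prod_T S hS t α hρ
  simp only [prod_sign_eq_neg_one_pow hS, hcard, Fintype.card_fin] at key
  rw [hSc]
  apply mul_left_cancel₀ hP
  rw [key]
  field_simp
  simp only [S, filter_filter]
end

section
/- Let k ∈ ℕ and let n ∈ ℕ be odd, let t : Fin (n+k) → ℤ, let α : Fin (n+k) → ℝ with sin(α s) ≠ 0 for every s < n, and let ρ ∈ ℝ with |ρ| < 1. Write σ(ε) = #{l < n : ε l = 1} for a sign vector ε : Fin (n+k) → {−1,1}. Then ∑_{j=0}^{∞} ρ^j · ∏_{s<n} U_{j + t s}(cos(α s)) · ∏_{n ≤ s < n+k} T_{j + t s}(cos(α s)) = ((−1)^{(n+1)/2} / (2^{n+k} · ∏_{s<n} sin(α s))) · ∑_{ε} (−1)^{σ(ε)} · [sin(∑_{s<n} (ε s)(t s + 1)(α s) + ∑_{n ≤ s} (ε s)(t s)(α s)) − ρ·sin(∑_{s<n} (ε s)(t s)(α s) + ∑_{n ≤ s} (ε s)(t s − 1)(α s))] / (1 − 2ρ·cos(∑_{s} (ε s)(α s)) + ρ²), where ε runs over all functions Fin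 (n+k) → {−1,1}. -/
/-!
Since `U_{j+t}(cos α) sin α = sin((j+t+1)α)` and `T_{j+t}(cos α) = cos((j+t)α)`, the `j`-th term
is `ρ^j / ∏ sin α` times a product of sines and cosines of angles linear in `j`. Expanding each
factor through `e^{±ix}` writes that product as a sum over sign vectors `ε` of `e^{i(jΨ_ε + Φ_ε)}`
with `Ψ_ε = ∑ ε_s α_s`; as the number of sine factors is odd, the coefficients are purely
imaginary, so the product is a signed sum of `sin(jΨ_ε + Φ_ε)`. Finally `∑_j ρ^j sin(jΨ + Φ)` is
the imaginary part of a geometric series in `ρ e^{iΨ}`.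
-/

open Polynomial

open Finset Complex

theorem Complex.ofReal_sin_eq_sum_signs (x : ℝ) :
    (Real.sin x : ℂ) =
      ∑ e : ({-1, 1} : Finset ℤ), (e : ℂ) * exp (((e : ℤ) * x : ℝ) * I) / (2 * I) := by
  rw [Finset.sum_coe_sort ({-1, 1} : Finset ℤ)
    (fun e : ℤ => (e : ℂ) * exp (((e : ℤ) * x : ℝ) * I) / (2 * I)),
    sum_pair (by norm_num), ofReal_sin, sin]
  field_simp
  push_cast
  ring_nf
  rw [I_sq]
  ring

theorem Complex.ofReal_cos_eq_sum_signs (x : ℝ) :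
    (Real.cos x : ℂ) = ∑ e : ({-1, 1} : Finset ℤ), exp (((e : ℤ) * x : ℝ) * I) / 2 := by
  rw [Finset.sum_coe_sort ({-1, 1} : Finset ℤ)
    (fun e : ℤ => exp (((e : ℤ) * x : ℝ) * I) / 2), sum_pair (by norm_num), ofReal_cos, cos]
  push_cast
  ring_nf

theorem Complex.inv_two_mul_I_pow_of_odd {m : ℕ} (hm : Odd m) :
    ((2 * I) ^ m)⁻¹ = (-1) ^ ((m + 1) / 2) * I / 2 ^ m := by
  obtain ⟨r, rfl⟩ := hm
  rw [show (2 * r + 1 + 1) / 2 = r + 1 by omega]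
  refine inv_eq_of_mul_eq_one_left ?_
  rw [mul_pow, pow_succ I, pow_mul, I_sq]
  field_simp
  ring_nf
  rw [pow_mul', neg_one_sq, one_pow, I_sq]
  ring

theorem hasSum_pow_mul_sin_nat_mul_add {ρ : ℝ} (hρ : |ρ| < 1) (ψ φ : ℝ) :
    HasSum (fun j : ℕ => ρ ^ j * Real.sin (j * ψ + φ))
      ((Real.sin φ - ρ * Real.sin (φ - ψ)) / (1 - 2 * ρ * Real.cos ψ + ρ ^ 2)) := by
  set z : ℂ := ρ * exp (ψ * I)
  have hz : ‖z‖ < 1 := by simpa [z, norm_exp_ofReal_mul_I] using hρ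
  have hre : (1 - z).re = 1 - ρ * Real.cos ψ := by simp [z, exp_ofReal_mul_I_re]
  have him : (1 - z).im = -(ρ * Real.sin ψ) := by simp [z, exp_ofReal_mul_I_im]
  have hnormSq : normSq (1 - z) = 1 - 2 * ρ * Real.cos ψ + ρ ^ 2 := by
    rw [normSq_apply, hre, him]
    linear_combination ρ ^ 2 * Real.sin_sq_add_cos_sq ψ
  have h := hasSum_im (((hasSum_geometric_of_norm_lt_one hz).mul_left (exp (φ * I))))
  convert h using 1
  · funext j
    have hterm : exp (φ * I) * z ^ j = ((ρ ^ j : ℝ) : ℂ) * exp ((j * ψ + φ : ℝ) * I) := by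
      rw [mul_pow, ← exp_nat_mul]
      push_cast
      rw [add_mul, exp_add]
      ring_nf
    rw [hterm, im_ofReal_mul, exp_ofReal_mul_I_im]
  · rw [← div_eq_mul_inv, div_im, hnormSq, hre, him, exp_ofReal_mul_I_re, exp_ofReal_mul_I_im,
      Real.sin_sub]
    ring

section SignVectors

variable {ι : Type*} [Fintype ι] (p : ι → Prop) [DecidablePred p]

theorem prod_sign_eq_neg_one_pow_mul (ε : ι → ({-1, 1} : Finset ℤ)) :
    ∏ s with p s, (ε s : ℤ) = (-1) ^ #{s | p s} * (-1) ^ #{s | p s ∧ (ε s : ℤ) = 1} := by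
  have hsign : ∀ s, (ε s : ℤ) = -1 * (-1) ^ (if (ε s : ℤ) = 1 then 1 else 0) := by
    intro s
    rcases mem_insert.mp (ε s).2 with h | h
    · simp [h]
    · simp [mem_singleton.mp h]
  rw [prod_congr rfl fun s _ => hsign s, prod_mul_distrib, prod_const, prod_pow_eq_pow_sum,
    ← card_filter, filter_filter]

theorem prod_sin_mul_prod_cos_eq_sum_exp [DecidableEq ι] (x : ι → ℝ) :
    (∏ s with p s, (Real.sin (x s) : ℂ)) * ∏ s with ¬p s, (Real.cos (x s) : ℂ) =
      ∑ ε : ι → ({-1, 1} : Finset ℤ),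
        (∏ s with p s, ((ε s : ℤ) : ℂ)) / ((2 * I) ^ #{s | p s} * 2 ^ #{s | ¬p s}) *
          exp ((∑ s, ((ε s : ℤ) : ℝ) * x s : ℝ) * I) := by
  have hfactor : ∀ s, (if p s then (Real.sin (x s) : ℂ) else Real.cos (x s)) =
      ∑ e : ({-1, 1} : Finset ℤ),
        (if p s then (e : ℂ) / (2 * I) else 2⁻¹) * exp (((e : ℤ) * x s : ℝ) * I) := by
    intro s
    split_ifs
    · rw [ofReal_sin_eq_sum_signs]
      exact Fintype.sum_congr _ _ fun e => by ring
    · rw [ofReal_cos_eq_sum_signs]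
      exact Fintype.sum_congr _ _ fun e => by ring
  rw [← prod_ite, Fintype.prod_congr _ _ hfactor, Fintype.prod_sum]
  refine Fintype.sum_congr _ _ fun ε => ?_
  rw [prod_mul_distrib, prod_ite, ofReal_sum, sum_mul, exp_sum, prod_div_distrib, prod_const,
    prod_const]
  simp only [div_eq_mul_inv, mul_inv, inv_pow]
  ring

theorem prod_sin_mul_prod_cos_eq_sum_sin_of_odd [DecidableEq ι] (hp : Odd #{s | p s})
    (x : ι → ℝ) :
    (∏ s with p s, Real.sin (x s)) * ∏ s with ¬p s, Real.cos (x s) =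
      (-1) ^ ((#{s | p s} + 1) / 2) / 2 ^ Fintype.card ι *
        ∑ ε : ι → ({-1, 1} : Finset ℤ),
          (-1) ^ #{s | p s ∧ (ε s : ℤ) = 1} *
            Real.sin (∑ s, ((ε s : ℤ) : ℝ) * x s) := by
  have h := congrArg re (prod_sin_mul_prod_cos_eq_sum_exp p x)
  rw [← ofReal_prod, ← ofReal_prod, ← ofReal_mul, ofReal_re] at h
  rw [h, re_sum, mul_sum]
  refine Fintype.sum_congr _ _ fun ε => ?_
  have hcoeff : (∏ s with p s, ((ε s : ℤ) : ℂ)) / ((2 * I) ^ #{s | p s} * 2 ^ #{s | ¬p s}) =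
      ((-(-1) ^ ((#{s | p s} + 1) / 2) / 2 ^ Fintype.card ι *
        (-1) ^ #{s | p s ∧ (ε s : ℤ) = 1} : ℝ) : ℂ) * I := by
    rw [← card_univ, ← card_filter_add_card_filter_not (s := univ) p]
    have hsign := congrArg (fun z : ℤ => (z : ℂ)) (prod_sign_eq_neg_one_pow_mul p ε)
    push_cast at hsign
    rw [hsign, div_eq_mul_inv, mul_inv, inv_two_mul_I_pow_of_odd hp, hp.neg_one_pow]
    push_cast
    ring
  rw [hcoeff, mul_assoc, re_ofReal_mul, I_mul_re, exp_ofReal_mul_I_im]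
  ring

theorem sum_mul_add_ite_mul (e t α : ι → ℝ) (j : ℝ) :
    ∑ s, e s * ((j + t s + if p s then 1 else 0) * α s) =
      j * ∑ s, e s * α s +
        (∑ s with p s, e s * (t s + 1) * α s + ∑ s with ¬p s, e s * t s * α s) := by
  have hpos : ∀ s ∈ univ.filter p, e s * ((j + t s + if p s then 1 else 0) * α s) =
      j * (e s * α s) + e s * (t s + 1) * α s := fun s hs => by
    rw [if_pos (mem_filter.mp hs).2]; ring
  have hneg : ∀ s ∈ univ.filter (¬p ·), e s * ((j + t s + if p s then 1 else 0) * α s) =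
      j * (e s * α s) + e s * t s * α s := fun s hs => by
    rw [if_neg (mem_filter.mp hs).2]; ring
  rw [← sum_filter_add_sum_filter_not univ p, sum_congr rfl hpos, sum_congr rfl hneg,
    ← sum_filter_add_sum_filter_not univ p (fun s => e s * α s), sum_add_distrib,
    sum_add_distrib, ← mul_sum, ← mul_sum]
  ring

theorem sum_split_sub_sum_mul (e t α : ι → ℝ) :
    (∑ s with p s, e s * (t s + 1) * α s + ∑ s with ¬p s, e s * t s * α s) -
        ∑ s, e s * α s =
      ∑ s with p s, e s * t s * α s + ∑ s with ¬p s, e s * (t s - 1) * α s := by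
  rw [← sum_filter_add_sum_filter_not univ p (fun s => e s * α s), add_sub_add_comm,
    ← sum_sub_distrib, ← sum_sub_distrib]
  congr 1 <;> exact sum_congr rfl fun s _ => by ring

end SignVectors

theorem prod_chebyshevU_eval_cos {ι : Type*} (S : Finset ι) (m : ι → ℤ) (θ : ι → ℝ)
    (hθ : ∀ s ∈ S, Real.sin (θ s) ≠ 0) :
    ∏ s ∈ S, (Chebyshev.U ℝ (m s)).eval (Real.cos (θ s)) =
      (∏ s ∈ S, Real.sin ((m s + 1) * θ s)) / ∏ s ∈ S, Real.sin (θ s) := by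
  rw [eq_div_iff (prod_ne_zero_iff.mpr hθ), ← prod_mul_distrib]
  exact prod_congr rfl fun s _ => Chebyshev.U_real_cos (θ s) (m s)

theorem hasSum_pow_mul_prod_chebyshevU_mul_prod_chebyshevT {ι : Type*} [Fintype ι]
    [DecidableEq ι] (p : ι → Prop) [DecidablePred p] (hp : Odd #{s | p s}) (t : ι → ℤ)
    (α : ι → ℝ) (hα : ∀ s, p s → Real.sin (α s) ≠ 0) {ρ : ℝ} (hρ : |ρ| < 1) :
    HasSum (fun j : ℕ => ρ ^ j *
        (∏ s with p s, (Chebyshev.U ℝ ((j : ℤ) + t s)).eval (Real.cos (α s))) *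
        ∏ s with ¬p s, (Chebyshev.T ℝ ((j : ℤ) + t s)).eval (Real.cos (α s)))
      ((-1) ^ ((#{s | p s} + 1) / 2) / (2 ^ Fintype.card ι * ∏ s with p s, Real.sin (α s)) *
        ∑ ε : ι → ({-1, 1} : Finset ℤ), (-1) ^ #{s | p s ∧ (ε s : ℤ) = 1} *
          ((Real.sin ((∑ s with p s, ((ε s : ℤ) : ℝ) * ((t s : ℝ) + 1) * α s) +
              ∑ s with ¬p s, ((ε s : ℤ) : ℝ) * (t s : ℝ) * α s) -
            ρ * Real.sin ((∑ s with p s, ((ε s : ℤ) : ℝ) * (t s : ℝ) * α s) +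
              ∑ s with ¬p s, ((ε s : ℤ) : ℝ) * ((t s : ℝ) - 1) * α s)) /
          (1 - 2 * ρ * Real.cos (∑ s, ((ε s : ℤ) : ℝ) * α s) + ρ ^ 2))) := by
  set C := (-1) ^ ((#{s | p s} + 1) / 2) / (2 ^ Fintype.card ι * ∏ s with p s, Real.sin (α s))
  set Ψ : (ι → ({-1, 1} : Finset ℤ)) → ℝ := fun ε => ∑ s, ((ε s : ℤ) : ℝ) * α s
  set Φ : (ι → ({-1, 1} : Finset ℤ)) → ℝ := fun ε =>
    ∑ s with p s, ((ε s : ℤ) : ℝ) * ((t s : ℝ) + 1) * α s +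
      ∑ s with ¬p s, ((ε s : ℤ) : ℝ) * (t s : ℝ) * α s
  have hterm : ∀ j : ℕ, ρ ^ j *
      (∏ s with p s, (Chebyshev.U ℝ ((j : ℤ) + t s)).eval (Real.cos (α s))) *
      ∏ s with ¬p s, (Chebyshev.T ℝ ((j : ℤ) + t s)).eval (Real.cos (α s)) =
      C * ∑ ε : ι → ({-1, 1} : Finset ℤ),
        (-1) ^ #{s | p s ∧ (ε s : ℤ) = 1} * (ρ ^ j * Real.sin (j * Ψ ε + Φ ε)) := by
    intro j
    set x : ι → ℝ := fun s => ((j : ℝ) + t s + if p s then 1 else 0) * α s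
    have hU : ∏ s with p s, (Chebyshev.U ℝ ((j : ℤ) + t s)).eval (Real.cos (α s)) =
        (∏ s with p s, Real.sin (x s)) / ∏ s with p s, Real.sin (α s) := by
      rw [prod_chebyshevU_eval_cos _ _ _ fun s hs => hα s (mem_filter.mp hs).2]
      congr 1
      refine prod_congr rfl fun s hs => ?_
      simp [x, (mem_filter.mp hs).2]
    have hT : ∏ s with ¬p s, (Chebyshev.T ℝ ((j : ℤ) + t s)).eval (Real.cos (α s)) =
        ∏ s with ¬p s, Real.cos (x s) := by
      refine prod_congr rfl fun s hs => ?_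
      simp [x, (mem_filter.mp hs).2]
    rw [hU, hT, mul_div_assoc', div_mul_eq_mul_div, mul_assoc,
      prod_sin_mul_prod_cos_eq_sum_sin_of_odd p hp]
    simp only [x, sum_mul_add_ite_mul, C, Ψ, Φ, mul_sum, sum_div]
    refine sum_congr rfl fun ε _ => ?_
    ring
  have hsum := (hasSum_sum (s := univ) fun ε _ =>
    ((hasSum_pow_mul_sin_nat_mul_add hρ (Ψ ε) (Φ ε)).mul_left
      ((-1) ^ #{s | p s ∧ (ε s : ℤ) = 1}))).mul_left C
  simp only [← hterm] at hsum
  simpa only [Φ, Ψ, sum_split_sub_sum_mul] using hsum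

theorem chebyshev_mixed_gen_fun_odd (k n : ℕ) (hn : Odd n) (t : Fin (n + k) → ℤ)
    (α : Fin (n + k) → ℝ) (hα : ∀ s : Fin (n + k), (s : ℕ) < n → Real.sin (α s) ≠ 0)
    (ρ : ℝ) (hρ : |ρ| < 1) :
    ∑' j : ℕ, ρ ^ j *
        (∏ s ∈ Finset.univ.filter (fun s : Fin (n + k) => (s : ℕ) < n),
          (Chebyshev.U ℝ ((j : ℤ) + t s)).eval (Real.cos (α s))) *
        (∏ s ∈ Finset.univ.filter (fun s : Fin (n + k) => n ≤ (s : ℕ)),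
          (Chebyshev.T ℝ ((j : ℤ) + t s)).eval (Real.cos (α s))) =
      ((-1 : ℝ) ^ ((n + 1) / 2) /
          (2 ^ (n + k) *
            ∏ s ∈ Finset.univ.filter (fun s : Fin (n + k) => (s : ℕ) < n), Real.sin (α s))) *
        ∑ ε : Fin (n + k) → ({-1, 1} : Finset ℤ),
          (-1 : ℝ) ^
              (Finset.univ.filter
                (fun l : Fin (n + k) => (l : ℕ) < n ∧ (ε l : ℤ) = 1)).card *
            ((Real.sin
                ((∑ s ∈ Finset.univ.filter (fun s : Fin (n + k) => (s : ℕ) < n),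
                    ((ε s : ℤ) : ℝ) * ((t s : ℝ) + 1) * α s) +
                  ∑ s ∈ Finset.univ.filter (fun s : Fin (n + k) => n ≤ (s : ℕ)),
                    ((ε s : ℤ) : ℝ) * (t s : ℝ) * α s) -
                ρ * Real.sin
                  ((∑ s ∈ Finset.univ.filter (fun s : Fin (n + k) => (s : ℕ) < n),
                      ((ε s : ℤ) : ℝ) * (t s : ℝ) * α s) +
                    ∑ s ∈ Finset.univ.filter (fun s : Fin (n + k) => n ≤ (s : ℕ)),
                      ((ε s : ℤ) : ℝ) * ((t s : ℝ) - 1) * α s)) /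
              (1 - 2 * ρ * Real.cos (∑ s, ((ε s : ℤ) : ℝ) * α s) + ρ ^ 2)) := by
  have h := hasSum_pow_mul_prod_chebyshevU_mul_prod_chebyshevT
    (fun s : Fin (n + k) => (s : ℕ) < n)
    (by rwa [Fin.card_filter_val_lt, min_eq_right (Nat.le_add_right n k)]) t α hα hρ
  simp only [not_lt, Fin.card_filter_val_lt, min_eq_right (Nat.le_add_right n k),
    Fintype.card_fin] at h
  exact h.tsum_eq
end

section
/- For all x, y ∈ ℝ with |x| ≤ 1, |y| ≤ 1 and all ρ ∈ ℝ with |ρ| < 1, one has ∑_{n=0}^{∞} ρ^n · U_n(x) · U_n(y) = (1 − ρ²) / w₂(x,y|ρ). -/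
/-!
The sequence `a n = U_n(x) U_n(y)` is a product of two solutions of second-order recurrences
`u (n + 2) = 2 z u (n + 1) - u n`, so it satisfies a fourth-order linear recurrence whose
characteristic roots are `e^{±iθ ± iφ}` (`x = cos θ`, `y = cos φ`). The reversed characteristic
polynomial, evaluated at `ρ`, is exactly `w₂(x, y | ρ)`; hence `w₂ · ∑ a n ρ ^ n` is a cubic in `ρ`
determined by `a 0, …, a 3`, and that cubic turns out to be `1 - ρ ^ 2`. The series converges
because `|U_n| ≤ n + 1` on `[-1, 1]`, and `w₂ > 0` there by a sum-of-squares decomposition.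
-/

open Polynomial Finset

namespace LinearRecurrence

section Summation

variable {R : Type*} [CommRing R] [TopologicalSpace R] [IsTopologicalRing R] [T2Space R]

theorem IsSolution.one_sub_mul_tsum {E : LinearRecurrence R} {a : ℕ → R} (ha : E.IsSolution a)
    {ρ : R} (hs : Summable fun n ↦ a n * ρ ^ n) :
    (1 - ∑ i, E.coeffs i * ρ ^ (E.order - i)) * ∑' n, a n * ρ ^ n =
      ∑ j ∈ range E.order, a j * ρ ^ j -
        ∑ i, E.coeffs i * ρ ^ (E.order - i) * ∑ j ∈ range i, a j * ρ ^ j := by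
  set f : ℕ → R := fun n ↦ a n * ρ ^ n
  have tail (k : ℕ) : ∑' n, f (n + k) = ∑' n, f n - ∑ j ∈ range k, f j :=
    eq_sub_of_add_eq' (hs.sum_add_tsum_nat_add k)
  have shift (n : ℕ) :
      f (n + E.order) = ∑ i, E.coeffs i * ρ ^ (E.order - i) * f (n + i) := by
    simp only [f, ha n, sum_mul]
    refine sum_congr rfl fun i _ ↦ ?_
    rw [show n + E.order = E.order - i + (n + i) by omega, pow_add]
    ring
  have key : ∑' n, f (n + E.order) =
      ∑ i, E.coeffs i * ρ ^ (E.order - i) * ∑' n, f (n + i) := by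
    rw [tsum_congr shift, Summable.tsum_finsetSum (s := univ)
      (f := fun i n ↦ E.coeffs i * ρ ^ (E.order - i) * f (n + i))
      fun i _ ↦ ((summable_nat_add_iff i).2 hs).mul_left _]
    exact sum_congr rfl fun i _ ↦ ((summable_nat_add_iff i).2 hs).tsum_mul_left _
  simp only [tail, mul_sub, sum_sub_distrib] at key
  rw [sub_mul, one_mul, sum_mul]
  linear_combination key

end Summation

section ChebyshevProduct

variable {R : Type*} [CommRing R]

/-- The characteristic roots are the products `αβ` of a root `α` of `X ^ 2 - s X + 1` and a
root `β` of `X ^ 2 - t X + 1`. -/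
def chebyshevProduct (s t : R) : LinearRecurrence R :=
  ⟨4, ![-1, s * t, 2 - s ^ 2 - t ^ 2, s * t]⟩

theorem isSolution_chebyshevProduct {s t : R} {u v : ℕ → R}
    (hu : ∀ n, u (n + 2) = s * u (n + 1) - u n) (hv : ∀ n, v (n + 2) = t * v (n + 1) - v n) :
    (chebyshevProduct s t).IsSolution (u * v) := by
  unfold chebyshevProduct IsSolution
  intro n
  have hu3 : u (n + 3) = s * u (n + 2) - u (n + 1) := hu (n + 1)
  have hu4 : u (n + 4) = s * u (n + 3) - u (n + 2) := hu (n + 2)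
  have hv3 : v (n + 3) = t * v (n + 2) - v (n + 1) := hv (n + 1)
  have hv4 : v (n + 4) = t * v (n + 3) - v (n + 2) := hv (n + 2)
  simp only [Fin.sum_univ_four, Matrix.cons_val, Fin.coe_ofNat_eq_mod, Nat.reduceMod,
    Pi.mul_apply, add_zero]
  rw [hu4, hv4, hu3, hv3, hu n, hv n]
  ring

theorem IsSolution.one_sub_mul_tsum_of_chebyshevProduct [TopologicalSpace R]
    [IsTopologicalRing R] [T2Space R] {s t ρ : R} {a : ℕ → R}
    (ha : (chebyshevProduct s t).IsSolution a) (hs : Summable fun n ↦ a n * ρ ^ n) :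
    (1 - s * t * ρ - (2 - s ^ 2 - t ^ 2) * ρ ^ 2 - s * t * ρ ^ 3 + ρ ^ 4) * ∑' n, a n * ρ ^ n =
      a 0 + (a 1 - s * t * a 0) * ρ + (a 2 - s * t * a 1 - (2 - s ^ 2 - t ^ 2) * a 0) * ρ ^ 2
        + (a 3 - s * t * a 2 - (2 - s ^ 2 - t ^ 2) * a 1 - s * t * a 0) * ρ ^ 3 := by
  have h := ha.one_sub_mul_tsum hs
  unfold chebyshevProduct at h
  simp only [Fin.sum_univ_four, Matrix.cons_val, Fin.coe_ofNat_eq_mod, Nat.reduceMod,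
    sum_range_succ, range_zero, sum_empty] at h
  linear_combination h

end ChebyshevProduct

end LinearRecurrence

theorem summable_add_one_sq_mul_geometric {r : ℝ} (hr : |r| < 1) :
    Summable fun n : ℕ ↦ ((n : ℝ) + 1) ^ 2 * r ^ n := by
  have h (k : ℕ) := summable_pow_mul_geometric_of_norm_lt_one k (r := r) hr
  refine ((h 2).add (((h 1).mul_left 2).add (h 0))).congr fun n ↦ ?_
  ring

namespace Polynomial.Chebyshev

theorem abs_eval_U_real_le (n : ℕ) {x : ℝ} (hx : |x| ≤ 1) : |(U ℝ n).eval x| ≤ n + 1 := by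
  induction n with
  | zero => simp
  | succ n ih =>
    rw [Nat.cast_succ, U_eq_X_mul_U_add_T, eval_add, eval_mul, eval_X]
    calc |x * (U ℝ n).eval x + (T ℝ (n + 1)).eval x|
        ≤ |x| * |(U ℝ n).eval x| + |(T ℝ (n + 1)).eval x| := by
          rw [← abs_mul]; exact abs_add_le _ _
      _ ≤ 1 * (n + 1) + 1 := by
          gcongr
          exact abs_eval_T_real_le_one _ hx
      _ = (n + 1 : ℕ) + 1 := by push_cast; ring

theorem summable_eval_U_mul_eval_U_mul_geometric {x y ρ : ℝ} (hx : |x| ≤ 1) (hy : |y| ≤ 1)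
    (hρ : |ρ| < 1) : Summable fun n : ℕ ↦ (U ℝ n).eval x * (U ℝ n).eval y * ρ ^ n := by
  refine (summable_add_one_sq_mul_geometric (r := |ρ|) (by rwa [abs_abs])).of_norm_bounded
    fun n ↦ ?_
  calc ‖(U ℝ n).eval x * (U ℝ n).eval y * ρ ^ n‖
      = |(U ℝ n).eval x| * |(U ℝ n).eval y| * |ρ| ^ n := by
        rw [Real.norm_eq_abs, abs_mul, abs_mul, abs_pow]
    _ ≤ (n + 1) * (n + 1) * |ρ| ^ n := by gcongr <;> exact abs_eval_U_real_le n ‹_›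
    _ = (n + 1) ^ 2 * |ρ| ^ n := by ring

end Polynomial.Chebyshev

theorem mehler_denominator_pos {x y ρ : ℝ} (hx : |x| ≤ 1) (hy : |y| ≤ 1) (hρ : |ρ| < 1) :
    0 < (1 - ρ ^ 2) ^ 2 - 4 * x * y * ρ * (1 + ρ ^ 2) + 4 * ρ ^ 2 * (x ^ 2 + y ^ 2) := by
  rw [show (1 - ρ ^ 2) ^ 2 - 4 * x * y * ρ * (1 + ρ ^ 2) + 4 * ρ ^ 2 * (x ^ 2 + y ^ 2)
      = (2 * ρ * x - (1 + ρ ^ 2) * y) ^ 2 + (1 - ρ ^ 2) ^ 2 * (1 - y ^ 2) by ring]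
  have hρ2 : 0 < 1 - ρ ^ 2 := sub_pos.2 ((sq_lt_one_iff_abs_lt_one ρ).2 hρ)
  rcases hy.lt_or_eq with hy | hy
  · have : 0 < 1 - y ^ 2 := sub_pos.2 ((sq_lt_one_iff_abs_lt_one y).2 hy)
    positivity
  · have hxρ : |2 * ρ * x| < |(1 + ρ ^ 2) * y| := by
      rw [abs_mul, abs_mul, abs_mul, abs_two, abs_of_pos (by positivity : (0:ℝ) < 1 + ρ ^ 2), hy]
      nlinarith [abs_nonneg ρ, abs_nonneg x, sq_abs ρ, sq_nonneg (|ρ| - 1)]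
    have : 2 * ρ * x - (1 + ρ ^ 2) * y ≠ 0 := fun h ↦ by
      rw [sub_eq_zero.mp h] at hxρ; exact lt_irrefl _ hxρ
    rw [← sq_abs y, hy]
    positivity

theorem poisson_mehler_chebyshev_U (x y ρ : ℝ) (hx : |x| ≤ 1) (hy : |y| ≤ 1) (hρ : |ρ| < 1) :
    ∑' n : ℕ, ρ ^ n * (Chebyshev.U ℝ (n : ℤ)).eval x * (Chebyshev.U ℝ (n : ℤ)).eval y =
      (1 - ρ ^ 2) /
        ((1 - ρ ^ 2) ^ 2 - 4 * x * y * ρ * (1 + ρ ^ 2) + 4 * ρ ^ 2 * (x ^ 2 + y ^ 2)) := by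
  set u : ℝ → ℕ → ℝ := fun z n ↦ (Chebyshev.U ℝ n).eval z
  have hrec (z : ℝ) (n : ℕ) : u z (n + 2) = 2 * z * u z (n + 1) - u z n := by simp [u]
  have hu0 (z : ℝ) : u z 0 = 1 := by simp [u]
  have hu1 (z : ℝ) : u z 1 = 2 * z := by simp [u]
  have hu2 (z : ℝ) : u z 2 = 4 * z ^ 2 - 1 := by rw [hrec z 0, hu0, hu1]; ring
  have hu3 (z : ℝ) : u z 3 = 8 * z ^ 3 - 4 * z := by rw [hrec z 1, hu1, hu2]; ring
  have h := (LinearRecurrence.isSolution_chebyshevProduct (hrec x) (hrec y))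
    |>.one_sub_mul_tsum_of_chebyshevProduct
      (Chebyshev.summable_eval_U_mul_eval_U_mul_geometric hx hy hρ)
  simp only [Pi.mul_apply, hu0, hu1, hu2, hu3] at h
  have hS : ∑' n : ℕ, ρ ^ n * (Chebyshev.U ℝ n).eval x * (Chebyshev.U ℝ n).eval y =
      ∑' n, (u x * u y) n * ρ ^ n :=
    tsum_congr fun n ↦ by simp only [u, Pi.mul_apply]; ring
  rw [hS, eq_div_iff (mehler_denominator_pos hx hy hρ).ne']
  linear_combination h
end

section
/- For all x, y ∈ ℝ with |x| ≤ 1, |y| ≤ 1 and all ρ ∈ ℝ with |ρ| < 1, one has ∑_{n=0}^{∞} ρ^n · T_n(x) · T_n(y) = (1 − ρ² + 2ρ²(x² + y²) − (ρ² + 3)ρxy) / w₂(x,y|ρ). -/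
/-!
Write `x = cos a`, `y = cos b`. The product formula `T_n(cos a) T_n(cos b) = (cos n(a+b) + cos n(a-b)) / 2`
splits the series into two series `∑ ρⁿ cos nθ`, each the real part of a geometric series in `ρ e^{iθ}`.
The two resulting denominators `1 - 2ρ cos θ + ρ²` multiply to `w₂(x, y | ρ)`, once `sin² = 1 - cos²`
eliminates the sines.
-/

open Polynomial Real

lemma hasSum_pow_mul_cos {ρ : ℝ} (hρ : |ρ| < 1) (θ : ℝ) :
    HasSum (fun n : ℕ => ρ ^ n * cos (n * θ))
      ((1 - ρ * cos θ) / (1 - 2 * ρ * cos θ + ρ ^ 2)) := by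
  set z : ℂ := ρ * Complex.exp (θ * Complex.I)
  have hz : ‖z‖ < 1 := by
    rwa [norm_mul, Complex.norm_exp_ofReal_mul_I, mul_one, Complex.norm_real, norm_eq_abs]
  have hpow (n : ℕ) : (z ^ n).re = ρ ^ n * cos (n * θ) := by
    rw [mul_pow, ← Complex.exp_nat_mul, ← mul_assoc, ← Complex.ofReal_natCast,
      ← Complex.ofReal_mul, ← Complex.ofReal_pow, Complex.re_ofReal_mul,
      Complex.exp_ofReal_mul_I_re]
  have hinv : (1 - z)⁻¹.re = (1 - ρ * cos θ) / (1 - 2 * ρ * cos θ + ρ ^ 2) := by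
    have hre : (1 - z).re = 1 - ρ * cos θ := by simp [z, Complex.exp_ofReal_mul_I_re]
    have him : (1 - z).im = -(ρ * sin θ) := by simp [z, Complex.exp_ofReal_mul_I_im]
    rw [Complex.inv_re, Complex.normSq_apply, hre, him]
    congr 1
    linear_combination ρ ^ 2 * sin_sq_add_cos_sq θ
  simpa only [Complex.reCLM_apply, hpow, hinv] using
    Complex.reCLM.hasSum (hasSum_geometric_of_norm_lt_one hz)

lemma one_sub_two_mul_mul_add_sq_pos {ρ c : ℝ} (hρ : |ρ| < 1) (hc : |c| ≤ 1) :
    0 < 1 - 2 * ρ * c + ρ ^ 2 := by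
  have : ρ * c ≤ |ρ| := by
    calc ρ * c ≤ |ρ| * |c| := (le_abs_self _).trans (abs_mul ρ c).le
    _ ≤ |ρ| := mul_le_of_le_one_right (abs_nonneg ρ) hc
  nlinarith [sq_abs ρ]

lemma T_real_cos_mul_T_real_cos (n : ℤ) (a b : ℝ) :
    (Chebyshev.T ℝ n).eval (cos a) * (Chebyshev.T ℝ n).eval (cos b) =
      (cos (n * (a + b)) + cos (n * (a - b))) / 2 := by
  rw [Chebyshev.T_real_cos, Chebyshev.T_real_cos, mul_add, mul_sub, cos_add, cos_sub]
  ring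

lemma sum_div_cos_add_cos_sub {ρ : ℝ} (hρ : |ρ| < 1) (a b : ℝ) :
    ((1 - ρ * cos (a + b)) / (1 - 2 * ρ * cos (a + b) + ρ ^ 2) +
        (1 - ρ * cos (a - b)) / (1 - 2 * ρ * cos (a - b) + ρ ^ 2)) / 2 =
      (1 - ρ ^ 2 + 2 * ρ ^ 2 * (cos a ^ 2 + cos b ^ 2) - (ρ ^ 2 + 3) * ρ * cos a * cos b) /
        ((1 - ρ ^ 2) ^ 2 - 4 * cos a * cos b * ρ * (1 + ρ ^ 2) +
          4 * ρ ^ 2 * (cos a ^ 2 + cos b ^ 2)) := by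
  have hD₁ := one_sub_two_mul_mul_add_sq_pos hρ (abs_cos_le_one (a + b))
  have hD₂ := one_sub_two_mul_mul_add_sq_pos hρ (abs_cos_le_one (a - b))
  rw [cos_add] at hD₁ ⊢
  rw [cos_sub] at hD₂ ⊢
  have hsin : (sin a * sin b) ^ 2 = (1 - cos a ^ 2) * (1 - cos b ^ 2) := by
    rw [mul_pow, sin_sq, sin_sq]
  have hW : (1 - ρ ^ 2) ^ 2 - 4 * cos a * cos b * ρ * (1 + ρ ^ 2) +
      4 * ρ ^ 2 * (cos a ^ 2 + cos b ^ 2) =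
      (1 - 2 * ρ * (cos a * cos b - sin a * sin b) + ρ ^ 2) *
        (1 - 2 * ρ * (cos a * cos b + sin a * sin b) + ρ ^ 2) := by
    linear_combination 4 * ρ ^ 2 * hsin
  rw [hW, div_add_div _ _ hD₁.ne' hD₂.ne', div_div, div_eq_div_iff (by positivity) (by positivity)]
  linear_combination (-4 * ρ ^ 2 * ((1 - 2 * ρ * (cos a * cos b - sin a * sin b) + ρ ^ 2) *
    (1 - 2 * ρ * (cos a * cos b + sin a * sin b) + ρ ^ 2))) * hsin

theorem chebyshev_T_T_gen_fun (x y ρ : ℝ) (hx : |x| ≤ 1) (hy : |y| ≤ 1) (hρ : |ρ| < 1) :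
    ∑' n : ℕ, ρ ^ n * (Chebyshev.T ℝ (n : ℤ)).eval x * (Chebyshev.T ℝ (n : ℤ)).eval y =
      (1 - ρ ^ 2 + 2 * ρ ^ 2 * (x ^ 2 + y ^ 2) - (ρ ^ 2 + 3) * ρ * x * y) /
        ((1 - ρ ^ 2) ^ 2 - 4 * x * y * ρ * (1 + ρ ^ 2) + 4 * ρ ^ 2 * (x ^ 2 + y ^ 2)) := by
  obtain ⟨a, rfl⟩ : ∃ a, cos a = x := ⟨arccos x, cos_arccos (abs_le.mp hx).1 (abs_le.mp hx).2⟩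
  obtain ⟨b, rfl⟩ : ∃ b, cos b = y := ⟨arccos y, cos_arccos (abs_le.mp hy).1 (abs_le.mp hy).2⟩
  rw [← sum_div_cos_add_cos_sub hρ a b]
  refine (((hasSum_pow_mul_cos hρ (a + b)).add (hasSum_pow_mul_cos hρ (a - b))).div_const 2
    |>.congr_fun fun n => ?_).tsum_eq
  rw [mul_assoc, T_real_cos_mul_T_real_cos]
  push_cast
  ring
end
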